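/- Let Q = conv((0,1,1),(1,0,1),(1,1,0),(0,−1,−1),(−1,0,−1),(−1,−1,0)) ⊂ ℝ^3 (a lattice octahedron). Then the only lattice points of Q are its six vertices and the origin, the point (1,1,1) lies in 2Q ∩ ℤ^3, and (1,1,1) is not the sum of two points of Q ∩ ℤ^3; in particular, Q is not IDP and has no unimodular cover. -/

import Mathlib

open scoped Pointwise

noncomputable section

/-- The real point corresponding to an integer point of `ℤ³`. -/
def toR3 (v : Fin 3 → ℤ) : Fin 3 → ℝ := fun i => (v i : ℝ)

/-- The set of lattice points of `ℝ³`. -/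
def Lat3 : Set (Fin 3 → ℝ) := Set.range toR3

/-- A unimodular tetrahedron: the convex hull of lattice points `v0, v1, v2, v3`
such that `v1 - v0, v2 - v0, v3 - v0` form a `ℤ`-basis of `ℤ³`. -/
def IsUnimodularTet (S : Set (Fin 3 → ℝ)) : Prop :=
  ∃ v : Fin 4 → Fin 3 → ℤ,
    S = convexHull ℝ {toR3 (v 0), toR3 (v 1), toR3 (v 2), toR3 (v 3)} ∧
    (Matrix.of ![v 1 - v 0, v 2 - v 0, v 3 - v 0]).det ∈ ({1, -1} : Set ℤ)

/-- A unimodular cover of `P`. -/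
def HasUnimodularCover (P : Set (Fin 3 → ℝ)) : Prop :=
  ∃ 𝒞 : Set (Set (Fin 3 → ℝ)),
    (∀ S ∈ 𝒞, IsUnimodularTet S ∧ S ⊆ P) ∧ ⋃₀ 𝒞 = P

/-- A polytope `R ⊆ ℝ³` is IDP if every lattice point of `nR` is a sum of `n`
lattice points of `R`, for every positive integer `n`. -/
def IsIDP3 (R : Set (Fin 3 → ℝ)) : Prop :=
  ∀ n : ℕ, 0 < n → ∀ z : Fin 3 → ℤ, toR3 z ∈ (n : ℝ) • R →
    ∃ f : Fin n → Fin 3 → ℤ, (∀ i, toR3 (f i) ∈ R) ∧ z = ∑ i, f i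

/-- The octahedron of Example 3 in the paper. -/
def octQ : Set (Fin 3 → ℝ) :=
  convexHull ℝ {![0,1,1], ![1,0,1], ![1,1,0], ![0,-1,-1], ![-1,0,-1], ![-1,-1,0]}

/-!
The eight facet inequalities of `octQ` leave only the seven listed lattice points, and all of them
have even coordinate sum. Hence every lattice point of `octQ`, and every edge vector of a lattice
tetrahedron inside `octQ`, lies in the index-two sublattice `{z | 2 ∣ z 0 + z 1 + z 2}`. The point
`(1,1,1) = 2 • (1/2,1/2,1/2) ∈ 2 • octQ` has odd coordinate sum, so it is not a sum of two lattice
points of `octQ`; and the determinant of a lattice tetrahedron inside `octQ` is even, so it is not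
unimodular.
-/

-- `det M • 1 = adjugate M *ᵥ (M *ᵥ 1)`, and `M *ᵥ 1` is the vector of row sums.
open Matrix in
theorem Matrix.dvd_det_of_forall_dvd_sum_row {n R : Type*} [Fintype n] [DecidableEq n]
    [Nonempty n] [CommRing R] (M : Matrix n n R) {a : R} (h : ∀ k, a ∣ ∑ j, M k j) :
    a ∣ M.det := by
  obtain ⟨i⟩ := ‹Nonempty n›
  have hdet : M.det = (M.adjugate *ᵥ (M *ᵥ fun _ => 1)) i := by
    rw [mulVec_mulVec, adjugate_mul, smul_mulVec, one_mulVec]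
    simp
  rw [hdet]
  exact Finset.dvd_sum fun k _ =>
    (by simpa [mulVec, dotProduct] using h k : a ∣ (M *ᵥ fun _ => 1) k).mul_left _

lemma toR3_add (a b : Fin 3 → ℤ) : toR3 (a + b) = toR3 a + toR3 b := by
  ext i; simp [toR3]

lemma toR3_injective : Function.Injective toR3 := fun _ _ h =>
  funext fun i => Int.cast_injective (α := ℝ) (congrFun h i)

lemma toR3_vec (a b c : ℤ) : toR3 ![a, b, c] = ![(a : ℝ), b, c] := by
  ext i; fin_cases i <;> rfl

section EvenLattice

variable {P : Set (Fin 3 → ℝ)}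

lemma not_exists_add_eq_toR3_of_dvd_sum (hP : ∀ z, toR3 z ∈ P → 2 ∣ ∑ i, z i)
    {z : Fin 3 → ℤ} (hz : ¬ 2 ∣ ∑ i, z i) :
    ¬ ∃ x y, x ∈ P ∩ Lat3 ∧ y ∈ P ∩ Lat3 ∧ x + y = toR3 z := by
  rintro ⟨_, _, ⟨hx, a, rfl⟩, ⟨hy, b, rfl⟩, hab⟩
  rw [← toR3_add] at hab
  rw [← toR3_injective hab] at hz
  simp only [Pi.add_apply, Finset.sum_add_distrib] at hz
  exact hz (dvd_add (hP a hx) (hP b hy))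

lemma not_isIDP3_of_dvd_sum (hP : ∀ z, toR3 z ∈ P → 2 ∣ ∑ i, z i)
    {z : Fin 3 → ℤ} (hz2 : toR3 z ∈ (2 : ℝ) • P) (hz : ¬ 2 ∣ ∑ i, z i) : ¬ IsIDP3 P := by
  intro hIDP
  obtain ⟨f, hf, rfl⟩ := hIDP 2 two_pos z (by exact_mod_cast hz2)
  refine not_exists_add_eq_toR3_of_dvd_sum hP hz
    ⟨_, _, ⟨hf 0, f 0, rfl⟩, ⟨hf 1, f 1, rfl⟩, ?_⟩
  rw [Fin.sum_univ_two, toR3_add]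

lemma not_isUnimodularTet_of_dvd_sum (hP : ∀ z, toR3 z ∈ P → 2 ∣ ∑ i, z i)
    {S : Set (Fin 3 → ℝ)} (hS : S ⊆ P) : ¬ IsUnimodularTet S := by
  rintro ⟨v, rfl, hdet⟩
  have hvertex : ∀ k, 2 ∣ ∑ i, v k i := fun k =>
    hP _ (hS (subset_convexHull ℝ _ (by fin_cases k <;> simp)))
  have hrows : ∀ k, 2 ∣ ∑ j, Matrix.of ![v 1 - v 0, v 2 - v 0, v 3 - v 0] k j := by
    intro k
    fin_cases k <;> simpa [Finset.sum_sub_distrib] using dvd_sub (hvertex _) (hvertex 0)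
  have h2 := Matrix.dvd_det_of_forall_dvd_sum_row _ hrows
  rcases hdet with h | h <;> rw [h] at h2 <;> norm_num at h2

lemma not_hasUnimodularCover_of_dvd_sum (hP : ∀ z, toR3 z ∈ P → 2 ∣ ∑ i, z i)
    (hne : P.Nonempty) : ¬ HasUnimodularCover P := by
  rintro ⟨C, hC, hcover⟩
  obtain ⟨-, S, hSC, -⟩ := hcover ▸ hne
  exact not_isUnimodularTet_of_dvd_sum hP (hC S hSC).2 (hC S hSC).1

end EvenLattice

-- The facet description of `octQ`, over any ordered ring so that it can be read on `ℤ³`.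
def octFacets (R : Type*) [Ring R] [LE R] : Set (Fin 3 → R) :=
  {x | x 0 + x 1 + x 2 ≤ 2 ∧ -2 ≤ x 0 + x 1 + x 2 ∧
       3 * x 0 - x 1 - x 2 ≤ 2 ∧ -2 ≤ 3 * x 0 - x 1 - x 2 ∧
       -x 0 + 3 * x 1 - x 2 ≤ 2 ∧ -2 ≤ -x 0 + 3 * x 1 - x 2 ∧
       -x 0 - x 1 + 3 * x 2 ≤ 2 ∧ -2 ≤ -x 0 - x 1 + 3 * x 2}

lemma convex_octFacets : Convex ℝ (octFacets ℝ) := by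
  rintro x ⟨h1, h2, h3, h4, h5, h6, h7, h8⟩ y ⟨g1, g2, g3, g4, g5, g6, g7, g8⟩ a b ha hb hab
  simp only [octFacets, Set.mem_ofPred_eq, Pi.add_apply, Pi.smul_apply, smul_eq_mul]
  refine ⟨?_, ?_, ?_, ?_, ?_, ?_, ?_, ?_⟩ <;> nlinarith

lemma octQ_subset_octFacets : octQ ⊆ octFacets ℝ := by
  refine convexHull_min ?_ convex_octFacets
  simp [Set.insert_subset_iff, octFacets]
  norm_num

lemma toR3_mem_octFacets_iff (z : Fin 3 → ℤ) : toR3 z ∈ octFacets ℝ ↔ z ∈ octFacets ℤ := by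
  simp only [octFacets, Set.mem_ofPred_eq, toR3]
  norm_cast

def octLattice : Set (Fin 3 → ℤ) :=
  {![0,1,1], ![1,0,1], ![1,1,0], ![0,-1,-1], ![-1,0,-1], ![-1,-1,0], ![0,0,0]}

lemma mem_octLattice_of_mem_octFacets {z : Fin 3 → ℤ} (hz : z ∈ octFacets ℤ) :
    z ∈ octLattice := by
  obtain ⟨h1, h2, h3, h4, h5, h6, h7, h8⟩ := hz
  have hcoords : (z 0 = 0 ∧ z 1 = 1 ∧ z 2 = 1) ∨ (z 0 = 1 ∧ z 1 = 0 ∧ z 2 = 1) ∨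
      (z 0 = 1 ∧ z 1 = 1 ∧ z 2 = 0) ∨ (z 0 = 0 ∧ z 1 = -1 ∧ z 2 = -1) ∨
      (z 0 = -1 ∧ z 1 = 0 ∧ z 2 = -1) ∨ (z 0 = -1 ∧ z 1 = -1 ∧ z 2 = 0) ∨
      (z 0 = 0 ∧ z 1 = 0 ∧ z 2 = 0) := by omega
  rw [show z = ![z 0, z 1, z 2] by ext i; fin_cases i <;> rfl]
  rcases hcoords with ⟨h0, h1, h2⟩ | ⟨h0, h1, h2⟩ | ⟨h0, h1, h2⟩ | ⟨h0, h1, h2⟩ |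
      ⟨h0, h1, h2⟩ | ⟨h0, h1, h2⟩ | ⟨h0, h1, h2⟩ <;>
    simp [octLattice, h0, h1, h2]

lemma dvd_sum_of_mem_octLattice {z : Fin 3 → ℤ} (hz : z ∈ octLattice) : 2 ∣ ∑ i, z i := by
  rcases hz with rfl | rfl | rfl | rfl | rfl | rfl | rfl <;> decide

lemma image_toR3_octLattice : toR3 '' octLattice =
    ({![0,1,1], ![1,0,1], ![1,1,0], ![0,-1,-1], ![-1,0,-1], ![-1,-1,0], ![0,0,0]} :
      Set (Fin 3 → ℝ)) := by
  simp [octLattice, Set.image_insert_eq, toR3_vec]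

lemma convex_octQ : Convex ℝ octQ := convex_convexHull ℝ _

lemma mem_octQ_of_mem_vertices {x : Fin 3 → ℝ}
    (hx : x ∈ ({![0,1,1], ![1,0,1], ![1,1,0], ![0,-1,-1], ![-1,0,-1], ![-1,-1,0]} :
      Set (Fin 3 → ℝ))) : x ∈ octQ :=
  subset_convexHull ℝ _ hx

lemma zero_mem_octQ : (0 : Fin 3 → ℝ) ∈ octQ := by
  have h := convex_octQ.midpoint_mem (𝕜 := ℝ) (x := ![0,1,1]) (y := -![0,1,1])
    (mem_octQ_of_mem_vertices (by simp)) (mem_octQ_of_mem_vertices (by simp))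
  rwa [midpoint_self_neg] at h

lemma image_toR3_octLattice_subset_octQ : toR3 '' octLattice ⊆ octQ := by
  rw [image_toR3_octLattice]
  simp only [Set.insert_subset_iff, Set.singleton_subset_iff]
  refine ⟨?_, ?_, ?_, ?_, ?_, ?_, by simpa [← Matrix.zero_empty] using zero_mem_octQ⟩ <;>
    exact mem_octQ_of_mem_vertices (by simp)

lemma toR3_mem_octQ_iff (z : Fin 3 → ℤ) : toR3 z ∈ octQ ↔ z ∈ octLattice :=
  ⟨fun hz => mem_octLattice_of_mem_octFacets ((toR3_mem_octFacets_iff z).1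
      (octQ_subset_octFacets hz)),
    fun hz => image_toR3_octLattice_subset_octQ ⟨z, hz, rfl⟩⟩

lemma octQ_inter_Lat3 : octQ ∩ Lat3 = toR3 '' octLattice := by
  ext p
  constructor
  · rintro ⟨hp, z, rfl⟩
    exact ⟨z, (toR3_mem_octQ_iff z).1 hp, rfl⟩
  · rintro ⟨z, hz, rfl⟩
    exact ⟨(toR3_mem_octQ_iff z).2 hz, z, rfl⟩

lemma half_ones_mem_octQ : (![1/2, 1/2, 1/2] : Fin 3 → ℝ) ∈ octQ := by
  have h := convex_octQ.sum_mem (t := Finset.univ) (w := (![3/8, 1/4, 1/4, 1/8] : Fin 4 → ℝ))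
    (z := (![![0,1,1], ![1,0,1], ![1,1,0], ![0,-1,-1]] : Fin 4 → Fin 3 → ℝ))
    (fun i _ => by fin_cases i <;> norm_num) (by simp [Fin.sum_univ_four]; norm_num)
    (fun i _ => mem_octQ_of_mem_vertices (by fin_cases i <;> simp))
  convert h using 1
  ext i; fin_cases i <;> simp [Fin.sum_univ_four] <;> norm_num

lemma ones_mem_two_smul_octQ : (![1, 1, 1] : Fin 3 → ℝ) ∈ (2 : ℝ) • octQ := by
  convert Set.smul_mem_smul_set (a := (2 : ℝ)) half_ones_mem_octQ using 1
  ext i; fin_cases i <;> simp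

/-- The octahedron `Q` of the paper: its only lattice points are its six
vertices and the origin; `(1,1,1)` lies in `2Q ∩ ℤ³` but is not a sum of two
lattice points of `Q`.  In particular `Q` is not IDP and has no unimodular
cover. -/
theorem octahedron_not_IDP :
    octQ ∩ Lat3 =
      ({![0,1,1], ![1,0,1], ![1,1,0], ![0,-1,-1], ![-1,0,-1], ![-1,-1,0], ![0,0,0]} :
        Set (Fin 3 → ℝ)) ∧
    (![1,1,1] : Fin 3 → ℝ) ∈ (2:ℝ) • octQ ∧
    (¬ ∃ x y : Fin 3 → ℝ, x ∈ octQ ∩ Lat3 ∧ y ∈ octQ ∩ Lat3 ∧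
        x + y = ![1,1,1]) ∧
    ¬ IsIDP3 octQ ∧ ¬ HasUnimodularCover octQ := by
  have heven : ∀ z, toR3 z ∈ octQ → 2 ∣ ∑ i, z i := fun z hz =>
    dvd_sum_of_mem_octLattice ((toR3_mem_octQ_iff z).1 hz)
  have hodd : ¬ 2 ∣ ∑ i, (![1, 1, 1] : Fin 3 → ℤ) i := by decide
  have hones : toR3 ![1, 1, 1] = ![1, 1, 1] := by simp [toR3_vec]
  exact ⟨octQ_inter_Lat3.trans image_toR3_octLattice, ones_mem_two_smul_octQ,
    hones ▸ not_exists_add_eq_toR3_of_dvd_sum heven hodd,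
    not_isIDP3_of_dvd_sum heven (hones ▸ ones_mem_two_smul_octQ) hodd,
    not_hasUnimodularCover_of_dvd_sum heven ⟨0, zero_mem_octQ⟩⟩
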